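/- arXiv:1909.07728 — 5 statements merged into one kernel-verified Lean document; each statement's English description precedes it below -/
import Mathlib

section
/- Let K be a field, σ an automorphism of K, and f(t) = t^m − Σ a_i t^i ∈ K[t;σ] not right invariant, with nonzero coefficient indices λ₁, …, λ_r. Then the nucleus of the Petit algebra S_f equals the intersection ⋂_{j=1}^{r} Fix(σ^{m−λ_j}); in particular, Nuc(S_f) is a subfield of K. -/
open Polynomial

/-- Skew (twisted) multiplication on polynomials over `K`, representing the
multiplication of the twisted polynomial ring `K[t;σ]` with `t·a = σ(a)·t`:
`(a t^i)·(b t^j) = a σ^i(b) t^{i+j}`. -/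
noncomputable def sMul {K : Type} [Field K] (σ : K ≃+* K) (p q : K[X]) : K[X] :=
  p.sum fun i a => C a * (q.map ((σ ^ i : K ≃+* K) : K →+* K)) * X ^ i

/-- `f` is right invariant in `K[t;σ]`: `f·g ∈ R·f` for all `g`. -/
def RightInvariant {K : Type} [Field K] (σ : K ≃+* K) (f : K[X]) : Prop :=
  ∀ g : K[X], ∃ q : K[X], sMul σ f g = sMul σ q f

/-- Membership in the eigenring of `f`, i.e. the right nucleus of the Petit
algebra `S_f = K[t;σ]/K[t;σ]f` (for `f` not right invariant):
`{g | deg g < deg f ∧ f·g ∈ R·f}`. -/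
def InEigenring {K : Type} [Field K] (σ : K ≃+* K) (f g : K[X]) : Prop :=
  g.degree < f.degree ∧ ∃ q : K[X], sMul σ f g = sMul σ q f

/-- Remainder of right division by `f` in `K[t;σ]` (Petit multiplication in
`S_f` is `g ∘ h = (g·h) mod_r f`). -/
noncomputable def modRight {K : Type} [Field K] (σ : K ≃+* K) (f g : K[X]) : K[X] := by
  classical
  exact if h : ∃ r : K[X], r.degree < f.degree ∧ ∃ q : K[X], g = sMul σ q f + r
    then h.choose else 0


section Aux

variable {K : Type} [Field K]

lemma pow_apply_add (σ : K ≃+* K) (i j : ℕ) (x : K) :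
    (σ ^ (i + j)) x = (σ ^ i) ((σ ^ j) x) := by
  rw [pow_add]; rfl

lemma sMul_coeff (σ : K ≃+* K) (p q : K[X]) (n : ℕ) :
    (sMul σ p q).coeff n = ∑ i ∈ p.support,
      if i ≤ n then p.coeff i * (σ ^ i : K ≃+* K) (q.coeff (n - i)) else 0 := by
  unfold sMul
  rw [Polynomial.sum_def, Polynomial.finset_sum_coeff]
  refine Finset.sum_congr rfl fun i hi => ?_
  rw [coeff_mul_X_pow', coeff_C_mul, coeff_map]; rfl

lemma sMul_C_right_coeff (σ : K ≃+* K) (p : K[X]) (d : K) (n : ℕ) :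
    (sMul σ p (C d)).coeff n = p.coeff n * (σ ^ n : K ≃+* K) d := by
  rw [sMul_coeff]
  have h : ∀ i ∈ p.support,
      (if i ≤ n then p.coeff i * (σ ^ i : K ≃+* K) ((C d).coeff (n - i)) else 0)
      = if i = n then p.coeff i * (σ ^ n : K ≃+* K) d else 0 := by
    intro i _
    rcases eq_or_ne i n with rfl | hne
    · simp [coeff_C]
    · rw [if_neg hne]
      split_ifs with h1
      · rw [coeff_C, if_neg (by omega), map_zero, mul_zero]
      · rfl
  rw [Finset.sum_congr rfl h, Finset.sum_ite_eq' p.support n]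
  split_ifs with hmem
  · rfl
  · rw [Polynomial.notMem_support_iff.mp hmem, zero_mul]

lemma sMul_C_left (σ : K ≃+* K) (c : K) (p : K[X]) : sMul σ (C c) p = C c * p := by
  unfold sMul
  rw [Polynomial.sum_C_index (by simp)]
  have : ((σ ^ 0 : K ≃+* K) : K →+* K) = RingHom.id K := by
    ext x; rfl
  rw [this, Polynomial.map_id, pow_zero, mul_one]

lemma sMul_zero_left (σ : K ≃+* K) (p : K[X]) : sMul σ 0 p = 0 := by
  unfold sMul
  exact Polynomial.sum_zero_index _

theorem nucleus_eq_iInter_fix' (σ : K ≃+* K) (m : ℕ) (hm : 2 ≤ m)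
    (a : ℕ → K) (f : K[X]) (hf : f = X ^ m - ∑ i ∈ Finset.range m, C (a i) * X ^ i) :
    {d : K | (C d).degree < f.degree ∧ ∃ q : K[X], sMul σ f (C d) = sMul σ q f} =
        {d : K | ∀ i < m, a i ≠ 0 → (σ ^ (m - i)) d = d} := by
  -- coefficients of f
  have hfc : ∀ n, f.coeff n = (if n = m then (1:K) else 0) - (if n < m then a n else 0) := by
    intro n
    rw [hf, coeff_sub, coeff_X_pow, finset_sum_coeff]
    congr 1
    have : ∀ i ∈ Finset.range m, (C (a i) * X ^ i).coeff n
        = if n = i then a i else 0 := by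
      intro i _
      rw [coeff_C_mul, coeff_X_pow]
      split_ifs <;> simp
    rw [Finset.sum_congr rfl this, Finset.sum_ite_eq (Finset.range m) n a]
    simp [Finset.mem_range]
  have hcm : f.coeff m = 1 := by rw [hfc]; simp
  have hdegle : f.degree ≤ (m : ℕ) := by
    refine (degree_le_iff_coeff_zero f m).2 fun k hk => ?_
    have hk' : m < k := by exact_mod_cast hk
    rw [hfc, if_neg (by omega), if_neg (by omega), sub_zero]
  have hdeg : f.degree = m :=
    le_antisymm hdegle (le_degree_of_ne_zero (by rw [hcm]; exact one_ne_zero))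
  ext d
  simp only [Set.mem_setOf_eq]
  constructor
  · rintro ⟨-, q, hq⟩ i him hai
    rcases eq_or_ne d 0 with rfl | hd
    · simp
    -- q ≠ 0
    have hqne : q ≠ 0 := by
      rintro rfl
      rw [sMul_zero_left] at hq
      have := congrArg (fun p => Polynomial.coeff p m) hq
      simp only [coeff_zero] at this
      rw [sMul_C_right_coeff, hcm, one_mul] at this
      exact hd ((σ ^ m).injective (by simpa using this))
    -- q has natDegree 0
    set N := q.natDegree with hN
    have hN0 : N = 0 := by
      by_contra hN1
      have hcoeff := congrArg (fun p => Polynomial.coeff p (N + m)) hq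
      rw [sMul_C_right_coeff, hfc, if_neg (by omega), if_neg (by omega), sub_zero,
        zero_mul] at hcoeff
      rw [sMul_coeff] at hcoeff
      rw [Finset.sum_eq_single N] at hcoeff
      · rw [if_pos (by omega), show N + m - N = m by omega, hcm, map_one, mul_one] at hcoeff
        exact (Polynomial.leadingCoeff_ne_zero.mpr hqne) hcoeff.symm
      · intro i hi hne
        have hile : i ≤ N := Polynomial.le_natDegree_of_mem_supp i hi
        rw [if_pos (by omega), hfc, if_neg (by omega), if_neg (by omega), sub_zero,
          map_zero, mul_zero]
      · intro hNs
        rw [Polynomial.notMem_support_iff.mp hNs, zero_mul, if_pos (by omega)]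
    obtain ⟨c, rfl⟩ : ∃ c, q = C c :=
      ⟨q.coeff 0, Polynomial.eq_C_of_natDegree_eq_zero hN0⟩
    rw [sMul_C_left] at hq
    have hcm' : (σ ^ m) d = c := by
      have := congrArg (fun p => Polynomial.coeff p m) hq
      rwa [sMul_C_right_coeff, hcm, one_mul, coeff_C_mul, hcm, mul_one] at this
    have hci : (σ ^ i) d = c := by
      have := congrArg (fun p => Polynomial.coeff p i) hq
      rw [sMul_C_right_coeff, coeff_C_mul, hfc, if_neg (by omega), if_pos him,
        zero_sub] at this
      have h2 : a i * (σ ^ i) d = a i * c := by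
        have := neg_injective (by linear_combination this : -(a i * (σ ^ i) d) = -(a i * c))
        exact this
      exact mul_left_cancel₀ hai h2
    refine (σ ^ i).injective ?_
    rw [← pow_apply_add σ i (m - i) d, show i + (m - i) = m by omega, hcm', hci]
  · intro h
    refine ⟨?_, C ((σ ^ m : K ≃+* K) d), ?_⟩
    · rw [hdeg]
      exact lt_of_le_of_lt degree_C_le (by exact_mod_cast (show (0:ℕ) < m by omega))
    · rw [sMul_C_left]
      ext n
      rw [sMul_C_right_coeff, coeff_C_mul]
      rcases lt_trichotomy n m with h1 | rfl | h1
      · rw [hfc, if_neg (by omega), if_pos h1, zero_sub]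
        by_cases ha : a n = 0
        · simp [ha]
        · have hnd : (σ ^ n) d = (σ ^ m) d := by
            have h2 := congrArg (σ ^ n : K ≃+* K) (h n h1 ha)
            rw [← pow_apply_add σ n (m - n) d, show n + (m - n) = m by omega] at h2
            exact h2.symm
          rw [hnd]; ring
      · rw [hfc, if_pos rfl, if_neg (lt_irrefl _), sub_zero, one_mul, mul_one]
      · rw [hfc, if_neg (by omega), if_neg (by omega), sub_zero, zero_mul, mul_zero]


/-- The intersection of the fixed fields, as a subfield of `K`. -/
def fixSubfield (σ : K ≃+* K) (m : ℕ) (a : ℕ → K) : Subfield K where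
  carrier := {d : K | ∀ i < m, a i ≠ 0 → (σ ^ (m - i)) d = d}
  mul_mem' := fun hx hy i him hai => by
    rw [map_mul, hx i him hai, hy i him hai]
  one_mem' := fun i him hai => map_one _
  add_mem' := fun hx hy i him hai => by
    rw [map_add, hx i him hai, hy i him hai]
  zero_mem' := fun i him hai => map_zero _
  neg_mem' := fun {x} hx i him hai => by
    rw [map_neg, hx i him hai]
  inv_mem' := fun x hx i him hai => by
    rw [map_inv₀, hx i him hai]

end Aux

/-- Proposition 2.3 (i): for `f(t) = t^m - Σ a_i t^i ∈ K[t;σ]` not right invariant,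
the nucleus of `S_f` (that is, `K ∩ Nuc_r(S_f)`) equals the intersection of the fixed
fields `Fix(σ^{m-λ})` over the indices `λ` of the nonzero coefficients of `f`;
in particular it is a subfield of `K`. -/
theorem nucleus_eq_iInter_fix {K : Type} [Field K] (σ : K ≃+* K) (m : ℕ) (hm : 2 ≤ m)
    (a : ℕ → K) (f : K[X]) (hf : f = X ^ m - ∑ i ∈ Finset.range m, C (a i) * X ^ i)
    (hri : ¬ RightInvariant σ f) :
    {d : K | InEigenring σ f (C d)} =
        {d : K | ∀ i < m, a i ≠ 0 → (σ ^ (m - i)) d = d} ∧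
      ∃ E : Subfield K, (E : Set K) = {d : K | InEigenring σ f (C d)} := by
  have hset : {d : K | InEigenring σ f (C d)} =
      {d : K | ∀ i < m, a i ≠ 0 → (σ ^ (m - i)) d = d} :=
    nucleus_eq_iInter_fix' σ m hm a f hf
  exact ⟨hset, fixSubfield σ m a, by rw [hset]; rfl⟩
end

section
/- Let K be a field, σ an automorphism of K, and f(t) = t^m − Σ_{i=0}^{m−1} a_i t^i ∈ K[t;σ] monic of degree m ≥ 2, not right invariant. For k ∈ {1, …, m−1}, if a_i ∈ Fix(σ^k) for all i, then f t^k = t^k f in K[t;σ]; in particular f t^k ∈ K[t;σ]f, so t^k lies in the right nucleus of S_f, and t^m t^k = t^k t^m in S_f. -/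
open Polynomial

/-! Right multiplication by `t^k` in `K[t;σ]` is ordinary multiplication by `X^k`, while left
multiplication by `t^k` first applies `σ^k` to the coefficients. Hence `f` commutes with `t^k`
as soon as `σ^k` fixes the coefficients of `f`, and `t^k` is then its own right cofactor. -/

section SkewMul

variable {K : Type} [Field K] (σ : K ≃+* K)

lemma sMul_X_pow_right (p : K[X]) (k : ℕ) : sMul σ p (X ^ k) = p * X ^ k := by
  simp only [sMul, Polynomial.map_pow, map_X, Polynomial.sum, mul_assoc, ← pow_add]
  conv_rhs => rw [← p.sum_C_mul_X_pow_eq, Polynomial.sum, Finset.sum_mul]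
  simp only [mul_assoc, ← pow_add, add_comm]

lemma sMul_X_pow_left (q : K[X]) (k : ℕ) :
    sMul σ (X ^ k) q = q.map ((σ ^ k : K ≃+* K) : K →+* K) * X ^ k := by
  simp [sMul, Polynomial.sum, support_X_pow]

lemma sMul_X_pow_comm_of_map_eq {f : K[X]} {k : ℕ}
    (hf : f.map ((σ ^ k : K ≃+* K) : K →+* K) = f) :
    sMul σ f (X ^ k) = sMul σ (X ^ k) f := by
  rw [sMul_X_pow_right, sMul_X_pow_left, hf]

lemma sMul_X_pow_X_pow_comm (i j : ℕ) :
    sMul σ (X ^ i) (X ^ j) = sMul σ (X ^ j) (X ^ i) := by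
  rw [sMul_X_pow_right, sMul_X_pow_right, ← pow_add, ← pow_add, add_comm]

end SkewMul

section MonicOfCoeffs

variable {R : Type*} (a : ℕ → R) (m : ℕ)

lemma degree_sum_range_C_mul_X_pow_lt [Semiring R] :
    (∑ i ∈ Finset.range m, C (a i) * X ^ i).degree < (m : WithBot ℕ) := by
  simpa only [Fin.sum_univ_eq_sum_range (fun i => C (a i) * X ^ i)] using
    degree_sum_fin_lt (fun i : Fin m => a i)

lemma degree_X_pow_sub_sum_range [Ring R] [Nontrivial R] :
    (X ^ m - ∑ i ∈ Finset.range m, C (a i) * X ^ i).degree = (m : WithBot ℕ) := by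
  rw [degree_sub_eq_left_of_degree_lt] <;>
    simp only [degree_X_pow, degree_sum_range_C_mul_X_pow_lt]

lemma map_X_pow_sub_sum_range_of_fixed [Ring R] {φ : R →+* R} (hφ : ∀ i < m, φ (a i) = a i) :
    (X ^ m - ∑ i ∈ Finset.range m, C (a i) * X ^ i).map φ =
      X ^ m - ∑ i ∈ Finset.range m, C (a i) * X ^ i := by
  simp only [Polynomial.map_sub, Polynomial.map_pow, map_X, Polynomial.map_sum,
    Polynomial.map_mul, map_C]
  congr 1
  exact Finset.sum_congr rfl fun i hi => by rw [hφ i (Finset.mem_range.mp hi)]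

end MonicOfCoeffs

theorem pow_mem_rightNucleus_general {K : Type} [Field K] (σ : K ≃+* K) (m : ℕ) (hm : 2 ≤ m)
    (a : ℕ → K) (f : K[X]) (hf : f = X ^ m - ∑ i ∈ Finset.range m, C (a i) * X ^ i)
    (k : ℕ) (hk' : k ≤ m - 1)
    (hfix : ∀ i < m, (σ ^ k) (a i) = a i) :
    sMul σ f (X ^ k) = sMul σ (X ^ k) f ∧
      (∃ q : K[X], sMul σ f (X ^ k) = sMul σ q f) ∧
      InEigenring σ f (X ^ k) ∧
      modRight σ f (sMul σ (X ^ m) (X ^ k)) =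
        modRight σ f (sMul σ (X ^ k) (X ^ m)) := by
  subst hf
  have hcomm := sMul_X_pow_comm_of_map_eq σ (map_X_pow_sub_sum_range_of_fixed a m hfix)
  have hkm : k < m := hk'.trans_lt (Nat.sub_lt (by omega) one_pos)
  refine ⟨hcomm, ⟨X ^ k, hcomm⟩, ⟨?_, X ^ k, hcomm⟩, by rw [sMul_X_pow_X_pow_comm]⟩
  rw [degree_X_pow_sub_sum_range, degree_X_pow]
  exact_mod_cast hkm

/-- Theorem 3.2: let `f(t) = t^m - Σ_{i<m} a_i t^i ∈ K[t;σ]` be monic of degree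
`m ≥ 2`, not right invariant, and let `1 ≤ k ≤ m-1`. If `a_i ∈ Fix(σ^k)` for all
`i`, then `f·t^k = t^k·f` in `K[t;σ]`; in particular `f·t^k ∈ K[t;σ]·f`, so `t^k`
lies in the right nucleus of `S_f`, and `t^m·t^k = t^k·t^m` in `S_f`. -/
theorem pow_mem_rightNucleus {K : Type} [Field K] (σ : K ≃+* K) (m : ℕ) (hm : 2 ≤ m)
    (a : ℕ → K) (f : K[X]) (hf : f = X ^ m - ∑ i ∈ Finset.range m, C (a i) * X ^ i)
    (hri : ¬ RightInvariant σ f) (k : ℕ) (hk : 1 ≤ k) (hk' : k ≤ m - 1)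
    (hfix : ∀ i < m, (σ ^ k) (a i) = a i) :
    sMul σ f (X ^ k) = sMul σ (X ^ k) f ∧
      (∃ q : K[X], sMul σ f (X ^ k) = sMul σ q f) ∧
      InEigenring σ f (X ^ k) ∧
      modRight σ f (sMul σ (X ^ m) (X ^ k)) =
        modRight σ f (sMul σ (X ^ k) (X ^ m)) :=
  pow_mem_rightNucleus_general σ m hm a f hf k hk' hfix
end

section
/- Let K be a field, σ an automorphism of K with fixed field F, f(t) ∈ F[t] ⊂ K[t;σ] monic of degree m ≥ 2 and not right invariant, and let L = Nuc(S_f). Then L[t;σ|_L]/L[t;σ|_L]f is a subalgebra of Nuc_r(S_f); in particular L ⊕ Lt ⊕ ⋯ ⊕ Lt^{m−1} ⊆ Nuc_r(S_f). -/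
open Polynomial

/-!
Since `f` has coefficients in the fixed field of `σ`, right multiplication by `f` in `K[t;σ]`
is ordinary multiplication, so right division by `f` is ordinary division by the monic `f`.
Comparing coefficients in `f·c = q·f` shows that a constant `c` lies in `Nuc_r(S_f)` exactly
when `σ^j c = σ^m c` for every `j` with `a_j ≠ 0`; these `c` form a `σ`-stable subfield `L`.
For `g ∈ L[t]` this gives `f·g = g^{σ^m}·f`, so `g ∈ Nuc_r(S_f)`; `L[t;σ]` is closed under the
twisted product because `L` is `σ`-stable, and remainders modulo `f ∈ L[t]` stay in `L[t]`.
-/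

lemma Polynomial.coeff_modByMonic_mem {R S : Type*} [Ring R] [SetLike S R] [SubringClass S R]
    (T : S) {p q : R[X]} (hq : q.Monic) (hp : ∀ n, p.coeff n ∈ T) (hqT : ∀ n, q.coeff n ∈ T)
    (n : ℕ) : (p %ₘ q).coeff n ∈ T := by
  have hlifts : ∀ {r : R[X]}, (∀ n, r.coeff n ∈ T) → r ∈ lifts (SubringClass.subtype T) :=
    fun h => (lifts_iff_coeff_lifts _).mpr fun n => ⟨⟨_, h n⟩, rfl⟩
  obtain ⟨p', rfl⟩ := (mem_lifts p).mp (hlifts hp)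
  obtain ⟨q', rfl, -, hq'⟩ := lifts_and_natDegree_eq_and_monic (hlifts hqT) hq
  rw [← map_modByMonic _ hq', coeff_map]
  exact ((p' %ₘ q').coeff n).2

lemma Polynomial.monic_X_pow_sub_sum {R : Type*} [CommRing R] (m : ℕ) (a : ℕ → R) :
    (X ^ m - ∑ i ∈ Finset.range m, C (a i) * X ^ i).Monic :=
  monic_X_pow_sub (by simp_rw [← Fin.sum_univ_eq_sum_range, degree_sum_fin_lt])

lemma Polynomial.natDegree_X_pow_sub_sum {R : Type*} [CommRing R] [Nontrivial R] (m : ℕ)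
    (a : ℕ → R) :
    (X ^ m - ∑ i ∈ Finset.range m, C (a i) * X ^ i).natDegree = m := by
  apply natDegree_eq_of_degree_eq_some
  rw [degree_sub_eq_left_of_degree_lt, degree_X_pow]
  simp_rw [degree_X_pow, ← Fin.sum_univ_eq_sum_range, degree_sum_fin_lt]

namespace PetitAlgebra

open Finset

variable {K : Type} [Field K] (σ : K ≃+* K)

lemma pow_apply_eq_self {x : K} (hx : σ x = x) (n : ℕ) : (σ ^ n) x = x := by
  rw [RingAut.coe_pow]
  exact Function.IsFixedPt.iterate hx n

lemma coeff_sMul (p q : K[X]) (n : ℕ) :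
    (sMul σ p q).coeff n
      = ∑ x ∈ antidiagonal n, p.coeff x.1 * (σ ^ x.1) (q.coeff x.2) := by
  rw [Finset.Nat.sum_antidiagonal_eq_sum_range_succ (fun i j => p.coeff i * (σ ^ i) (q.coeff j)),
    sMul, Polynomial.sum_def, finsetSum_coeff]
  have hterm : ∀ i, (C (p.coeff i) * q.map ((σ ^ i : K ≃+* K) : K →+* K) * X ^ i).coeff n
      = if i ≤ n then p.coeff i * (σ ^ i) (q.coeff (n - i)) else 0 := by
    intro i
    rw [coeff_mul_X_pow']
    split_ifs
    · rw [coeff_C_mul, coeff_map]; rfl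
    · rfl
  simp only [hterm]
  rw [← sum_filter]
  refine sum_subset (fun i hi => ?_) (fun i hin hi => ?_)
  · rw [mem_filter] at hi
    exact mem_range_succ_iff.mpr hi.2
  · have hpi : p.coeff i = 0 := by
      by_contra hne
      exact hi (mem_filter.mpr ⟨mem_support_iff.mpr hne, mem_range_succ_iff.mp hin⟩)
    rw [hpi, zero_mul]

lemma sMul_eq_mul_of_coeff_fixed {f : K[X]} (hf : ∀ n, σ (f.coeff n) = f.coeff n) (q : K[X]) :
    sMul σ q f = q * f := by
  ext n
  rw [coeff_sMul, coeff_mul]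
  refine sum_congr rfl fun x _ => ?_
  rw [pow_apply_eq_self σ (hf x.2)]

lemma coeff_sMul_C (p : K[X]) (c : K) (n : ℕ) :
    (sMul σ p (C c)).coeff n = p.coeff n * (σ ^ n) c := by
  rw [coeff_sMul, sum_eq_single (n, 0)]
  · rw [coeff_C_zero]
  · rintro ⟨i, j⟩ hij hne
    have hj : j ≠ 0 := by
      rintro rfl
      exact hne (by simpa using hij)
    rw [coeff_C, if_neg hj, map_zero, mul_zero]
  · simp

/-- The paper's `L = K ∩ Nuc_r(S_f)` (see `inEigenring_C_iff`). -/
def coeffNucleus (f : K[X]) : Subfield K :=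
  ⨅ n ∈ f.support, ((σ ^ n : K ≃+* K) : K →+* K).eqLocusField (σ ^ f.natDegree : K ≃+* K)

variable {σ}

lemma mem_coeffNucleus {f : K[X]} {c : K} :
    c ∈ coeffNucleus σ f ↔ ∀ n, f.coeff n ≠ 0 → (σ ^ n) c = (σ ^ f.natDegree) c := by
  simp [coeffNucleus, Subfield.mem_iInf, RingHom.mem_eqLocusField]

lemma mem_coeffNucleus_of_fixed {f : K[X]} {c : K} (hc : σ c = c) : c ∈ coeffNucleus σ f :=
  mem_coeffNucleus.mpr fun n _ => by rw [pow_apply_eq_self σ hc, pow_apply_eq_self σ hc]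

lemma pow_apply_mem_coeffNucleus {f : K[X]} {c : K} (hc : c ∈ coeffNucleus σ f) (i : ℕ) :
    (σ ^ i) c ∈ coeffNucleus σ f := by
  rw [mem_coeffNucleus] at hc ⊢
  have hcomm : ∀ k, (σ ^ k) ((σ ^ i) c) = (σ ^ i) ((σ ^ k) c) := fun k => by
    rw [← RingAut.mul_apply, pow_mul_comm, RingAut.mul_apply]
  intro n hn
  rw [hcomm, hcomm, hc n hn]

lemma coeff_sMul_mem {f g h : K[X]} (hg : ∀ n, g.coeff n ∈ coeffNucleus σ f)
    (hh : ∀ n, h.coeff n ∈ coeffNucleus σ f) (n : ℕ) :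
    (sMul σ g h).coeff n ∈ coeffNucleus σ f := by
  rw [coeff_sMul]
  exact sum_mem fun x _ => mul_mem (hg x.1) (pow_apply_mem_coeffNucleus (hh x.2) x.1)

lemma sMul_eq_map_mul {f g : K[X]} (hg : ∀ n, g.coeff n ∈ coeffNucleus σ f) :
    sMul σ f g = g.map ((σ ^ f.natDegree : K ≃+* K) : K →+* K) * f := by
  ext n
  rw [coeff_sMul, mul_comm, coeff_mul]
  refine sum_congr rfl fun x _ => ?_
  rw [coeff_map]
  by_cases hx : f.coeff x.1 = 0
  · rw [hx, zero_mul, zero_mul]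
  · rw [mem_coeffNucleus.mp (hg x.2) x.1 hx]
    rfl

lemma inEigenring_of_coeff_mem {f g : K[X]} (hf : ∀ n, σ (f.coeff n) = f.coeff n)
    (hdeg : g.degree < f.degree) (hg : ∀ n, g.coeff n ∈ coeffNucleus σ f) :
    InEigenring σ f g :=
  ⟨hdeg, _, (sMul_eq_map_mul hg).trans (sMul_eq_mul_of_coeff_fixed σ hf _).symm⟩

lemma mem_coeffNucleus_of_inEigenring_C {f : K[X]} (hmonic : f.Monic)
    (hf : ∀ n, σ (f.coeff n) = f.coeff n) {c : K} (hc : InEigenring σ f (C c)) :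
    c ∈ coeffNucleus σ f := by
  obtain ⟨-, q, hq⟩ := hc
  rw [sMul_eq_mul_of_coeff_fixed σ hf] at hq
  have hqdeg : q.natDegree = 0 := by
    have hle : (q * f).natDegree ≤ f.natDegree := by
      rw [← hq, natDegree_le_iff_coeff_eq_zero]
      intro N hN
      rw [coeff_sMul_C, coeff_eq_zero_of_natDegree_lt hN, zero_mul]
    rcases eq_or_ne q 0 with rfl | hq0
    · exact natDegree_zero
    · rw [natDegree_mul hq0 hmonic.ne_zero] at hle
      omega
  have hcoeff : ∀ n, f.coeff n * (σ ^ n) c = q.coeff 0 * f.coeff n := fun n => by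
    rw [← coeff_sMul_C, hq, eq_C_of_natDegree_eq_zero hqdeg, coeff_C_mul, coeff_C_zero]
  have htop : (σ ^ f.natDegree) c = q.coeff 0 := by
    simpa [hmonic.coeff_natDegree] using hcoeff f.natDegree
  refine mem_coeffNucleus.mpr fun n hn => mul_left_cancel₀ hn ?_
  rw [hcoeff, htop, mul_comm]

lemma inEigenring_C_iff {f : K[X]} (hmonic : f.Monic) (hpos : 0 < f.natDegree)
    (hf : ∀ n, σ (f.coeff n) = f.coeff n) {c : K} :
    InEigenring σ f (C c) ↔ c ∈ coeffNucleus σ f := by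
  refine ⟨mem_coeffNucleus_of_inEigenring_C hmonic hf, fun hc => ?_⟩
  refine inEigenring_of_coeff_mem hf ?_ fun n => ?_
  · exact degree_C_le.trans_lt (by rwa [degree_eq_natDegree hmonic.ne_zero, Nat.cast_pos])
  · rw [coeff_C]
    split_ifs
    exacts [hc, zero_mem _]

lemma modRight_eq_modByMonic {f : K[X]} (hmonic : f.Monic)
    (hf : ∀ n, σ (f.coeff n) = f.coeff n) (p : K[X]) : modRight σ f p = p %ₘ f := by
  have hex : ∃ r : K[X], r.degree < f.degree ∧ ∃ q : K[X], p = sMul σ q f + r :=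
    ⟨p %ₘ f, degree_modByMonic_lt p hmonic, p /ₘ f, by
      rw [sMul_eq_mul_of_coeff_fixed σ hf, mul_comm, add_comm, modByMonic_add_div]⟩
  rw [modRight, dif_pos hex]
  obtain ⟨hdeg, q, hq⟩ := hex.choose_spec
  rw [sMul_eq_mul_of_coeff_fixed σ hf] at hq
  have hsplit : hex.choose + f * q = p := by rw [add_comm, mul_comm, ← hq]
  exact (div_modByMonic_unique q _ hmonic ⟨hsplit, hdeg⟩).2.symm

end PetitAlgebra

open PetitAlgebra in
theorem nucleusPoly_subalgebra_rightNucleus_general {K : Type} [Field K] (σ : K ≃+* K)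
    (m : ℕ) (hm : 2 ≤ m) (a : ℕ → K) (f : K[X])
    (hf : f = X ^ m - ∑ i ∈ Finset.range m, C (a i) * X ^ i)
    (hF : ∀ i, σ (a i) = a i) :
    (∀ g : K[X], g.degree < f.degree →
        (∀ i, InEigenring σ f (C (g.coeff i))) → InEigenring σ f g) ∧
      ∀ g h : K[X], g.degree < f.degree → h.degree < f.degree →
        (∀ i, InEigenring σ f (C (g.coeff i))) →
        (∀ i, InEigenring σ f (C (h.coeff i))) →
        (modRight σ f (sMul σ g h)).degree < f.degree ∧
          ∀ i, InEigenring σ f (C ((modRight σ f (sMul σ g h)).coeff i)) := by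
  have hmonic : f.Monic := hf ▸ monic_X_pow_sub_sum m a
  have hpos : 0 < f.natDegree := by rw [hf, natDegree_X_pow_sub_sum]; omega
  have hfix : ∀ n, σ (f.coeff n) = f.coeff n := fun n => by
    have hmap : f.map (σ : K →+* K) = f := by simp [hf, Polynomial.map_sum, hF]
    simpa using congrArg (coeff · n) hmap
  have hL : ∀ {g : K[X]}, (∀ i, InEigenring σ f (C (g.coeff i))) →
      ∀ i, g.coeff i ∈ coeffNucleus σ f :=
    fun hg i => (inEigenring_C_iff hmonic hpos hfix).mp (hg i)
  refine ⟨fun g hdeg hg => inEigenring_of_coeff_mem hfix hdeg (hL hg), fun g h _ _ hg hh => ?_⟩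
  rw [modRight_eq_modByMonic hmonic hfix]
  refine ⟨degree_modByMonic_lt _ hmonic, fun i => (inEigenring_C_iff hmonic hpos hfix).mpr ?_⟩
  exact coeff_modByMonic_mem _ hmonic (coeff_sMul_mem (hL hg) (hL hh))
    (fun n => mem_coeffNucleus_of_fixed (hfix n)) i

/-- Theorem 3.6: let `f(t) = t^m - Σ a_i t^i ∈ F[t] ⊂ K[t;σ]` be monic of degree
`m ≥ 2` and not right invariant, and let `L = Nuc(S_f)`. Then
`L[t;σ|_L]/L[t;σ|_L]f` is a subalgebra of `Nuc_r(S_f)`: every polynomial of degree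
`< m` with coefficients in `L` lies in `Nuc_r(S_f)` (so
`L ⊕ Lt ⊕ ⋯ ⊕ Lt^{m-1} ⊆ Nuc_r(S_f)`), and this set is closed under the
multiplication of `S_f`. -/
theorem nucleusPoly_subalgebra_rightNucleus {K : Type} [Field K] (σ : K ≃+* K)
    (m : ℕ) (hm : 2 ≤ m) (a : ℕ → K) (f : K[X])
    (hf : f = X ^ m - ∑ i ∈ Finset.range m, C (a i) * X ^ i)
    (hF : ∀ i, σ (a i) = a i)
    (hri : ¬ RightInvariant σ f) :
    (∀ g : K[X], g.degree < f.degree →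
        (∀ i, InEigenring σ f (C (g.coeff i))) → InEigenring σ f g) ∧
      ∀ g h : K[X], g.degree < f.degree → h.degree < f.degree →
        (∀ i, InEigenring σ f (C (g.coeff i))) →
        (∀ i, InEigenring σ f (C (h.coeff i))) →
        (modRight σ f (sMul σ g h)).degree < f.degree ∧
          ∀ i, InEigenring σ f (C ((modRight σ f (sMul σ g h)).coeff i)) :=
  nucleusPoly_subalgebra_rightNucleus_general σ m hm a f hf hF
end

section
/- Let K be a field, σ an automorphism of K of order n, and f(t) = t^m − Σ a_i t^i ∈ K[t;σ] monic with m = qc + r, 0 ≤ r < c, where n = bc. If [Nuc(S_f) : F] = c (F = Fix(σ)), then every nonzero coefficient index λ of f satisfies λ ≡ r (mod c); consequently f(t) = g(t^c) t^r for some polynomial g of degree q in K[t^c; σ^c]. -/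
/-! By the Galois correspondence `Fix(σ^d)` has degree `gcd(n, d) = d` over `F`, so the
hypothesis on the nucleus says exactly `d = c`. Hence `c ∣ m - λ` for every nonzero coefficient
index `λ`, i.e. `λ ≡ m ≡ r (mod c)`, and grouping the monomials of `f` by `λ = l c + r` exhibits
`f = g(t^c) t^r`. -/

open Polynomial

open IntermediateField Module

theorem finrank_fixedField_zpowers_pow {F K : Type*} [Field F] [Field K] [Algebra F K]
    [IsGalois F K] [FiniteDimensional F K] {σ : K ≃ₐ[F] K}
    (hgen : ∀ τ : K ≃ₐ[F] K, τ ∈ Subgroup.zpowers σ) (k : ℕ) :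
    finrank F (fixedField (Subgroup.zpowers (σ ^ k))) = (finrank F K).gcd k := by
  have horder : orderOf σ = finrank F K := by
    rw [orderOf_eq_card_of_forall_mem_zpowers hgen, IsGalois.card_aut_eq_finrank]
  have htower := finrank_mul_finrank F (fixedField (Subgroup.zpowers (σ ^ k))) K
  rw [finrank_fixedField_eq_card, Nat.card_zpowers, orderOf_pow, horder] at htower
  have hpos : 0 < finrank F K / (finrank F K).gcd k :=
    Nat.div_pos (Nat.gcd_le_left _ finrank_pos) (Nat.gcd_pos_of_pos_left _ finrank_pos)
  refine Nat.eq_of_mul_eq_mul_right hpos ?_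
  rw [htower, Nat.mul_div_cancel' (Nat.gcd_dvd_left _ _)]

theorem Finset.sum_range_mul_add_of_mod_eq {M : Type*} [AddCommMonoid M] {c q r : ℕ}
    (hr : r < c) (g : ℕ → M) (hg : ∀ i < q * c + r, g i ≠ 0 → i % c = r) :
    ∑ l ∈ range q, g (l * c + r) = ∑ i ∈ range (q * c + r), g i := by
  have hc : 0 < c := by omega
  refine sum_of_injOn (· * c + r) ?_ ?_ ?_ (fun _ _ => rfl)
  · intro x _ y _ hxy
    exact Nat.eq_of_mul_eq_mul_right hc (Nat.add_right_cancel hxy)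
  · intro l hl
    simp only [mem_coe, mem_range] at hl ⊢
    nlinarith
  · intro i hi hnot
    by_contra hgi
    simp only [mem_range] at hi
    have hdecomp : i / c * c + r = i := by
      rw [← hg i hi hgi]; exact Nat.div_add_mod' i c
    refine hnot ⟨i / c, ?_, hdecomp⟩
    rw [mem_coe, mem_range]
    exact Nat.lt_of_mul_lt_mul_right (a := c) (by omega)

theorem coeff_indices_congr_general (F K : Type) [Field F] [Field K] [Algebra F K]
    [IsGalois F K] [FiniteDimensional F K] [DecidableEq K]
    (n : ℕ) (hn : Module.finrank F K = n)
    (σ : K ≃ₐ[F] K) (hgen : ∀ τ : K ≃ₐ[F] K, τ ∈ Subgroup.zpowers σ)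
    (c : ℕ)
    (m : ℕ) (a : ℕ → K) (f : K[X])
    (hf : f = X ^ m - ∑ i ∈ Finset.range m, C (a i) * X ^ i)
    (q r : ℕ) (hr : r < c) (hqr : m = q * c + r)
    (d : ℕ)
    (hd : d = Nat.gcd
      (Finset.gcd ((Finset.range m).filter fun i => a i ≠ 0) fun i => m - i) n)
    (hL : Module.finrank F
      (IntermediateField.fixedField (Subgroup.zpowers (σ ^ d))) = c) :
    (∀ i < m, a i ≠ 0 → i % c = r) ∧
      ∃ bc : ℕ → K, bc q = 1 ∧
        f = ∑ l ∈ Finset.range (q + 1), C (bc l) * X ^ (l * c + r) := by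
  have hdc : d = c := by
    rw [← hL, finrank_fixedField_zpowers_pow hgen, hn,
      Nat.gcd_eq_right (hd ▸ Nat.gcd_dvd_right _ _)]
  have hindex : ∀ i < m, a i ≠ 0 → i % c = r := by
    intro i him hai
    have hdvd : c ∣ m - i := hdc ▸ hd ▸ (Nat.gcd_dvd_left _ _).trans
      (Finset.gcd_dvd (by simp [him, hai]))
    have hmod : i % c = m % c := (Nat.modEq_iff_dvd' him.le).mpr hdvd
    rw [hmod, hqr, Nat.mul_add_mod_self_right, Nat.mod_eq_of_lt hr]
  refine ⟨hindex, fun l => if l = q then 1 else -a (l * c + r), if_pos rfl, ?_⟩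
  have hsum := Finset.sum_range_mul_add_of_mod_eq hr (fun i => C (a i) * X ^ i)
    (fun i hi hai => hindex i (hqr ▸ hi) fun hai0 => hai (by simp [hai0]))
  have hlow : ∀ l ∈ Finset.range q, C (if l = q then 1 else -a (l * c + r)) * X ^ (l * c + r)
      = -(C (a (l * c + r)) * X ^ (l * c + r)) := fun l hl => by
    simp [(Finset.mem_range.mp hl).ne]
  beta_reduce
  rw [Finset.sum_range_succ, Finset.sum_congr rfl hlow, Finset.sum_neg_distrib, if_pos rfl,
    hf, hqr, ← hsum, map_one, one_mul]
  ring

/-- Theorem 3.5: let `K/F` be cyclic Galois of degree `n = b·c` with Galois group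
`⟨σ⟩`, and `f(t) = t^m - Σ a_i t^i ∈ K[t;σ]` monic, not right invariant, with
`m = q·c + r`, `0 ≤ r < c`. If `[Nuc(S_f) : F] = c`, then every nonzero coefficient
index `λ` of `f` satisfies `λ ≡ r (mod c)`; consequently `f(t) = g(t^c)·t^r` for a
polynomial `g` of degree `q` in `K[t^c;σ^c]`. -/
theorem coeff_indices_congr (F K : Type) [Field F] [Field K] [Algebra F K]
    [IsGalois F K] [FiniteDimensional F K] [DecidableEq K]
    (n : ℕ) (hn : Module.finrank F K = n)
    (σ : K ≃ₐ[F] K) (hgen : ∀ τ : K ≃ₐ[F] K, τ ∈ Subgroup.zpowers σ)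
    (σr : K ≃+* K) (hσr : ∀ x, σr x = σ x)
    (b c : ℕ) (hc : 0 < c) (hbc : n = b * c)
    (m : ℕ) (hm : 2 ≤ m) (a : ℕ → K) (f : K[X])
    (hf : f = X ^ m - ∑ i ∈ Finset.range m, C (a i) * X ^ i)
    (hri : ¬ RightInvariant σr f)
    (q r : ℕ) (hq : 0 < q) (hr : r < c) (hqr : m = q * c + r)
    (d : ℕ)
    (hd : d = Nat.gcd
      (Finset.gcd ((Finset.range m).filter fun i => a i ≠ 0) fun i => m - i) n)
    (hL : Module.finrank F
      (IntermediateField.fixedField (Subgroup.zpowers (σ ^ d))) = c) :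
    (∀ i < m, a i ≠ 0 → i % c = r) ∧
      ∃ bc : ℕ → K, bc q = 1 ∧
        f = ∑ l ∈ Finset.range (q + 1), C (bc l) * X ^ (l * c + r) :=
  coeff_indices_congr_general F K n hn σ hgen c m a f hf q r hr hqr d hd hL
end

section
/- Let K/F be cyclic Galois of degree n with ⟨σ⟩ = Gal(K/F), and let f(t) = t^2 − a_1 t − a_0 ∈ K[t;σ] be not right invariant. If a_1 ≠ 0 then Nuc(S_f) = F, and if a_1 = 0, a_0 ≠ 0 then Nuc(S_f) = Fix(σ^2). Moreover, if n is odd then Fix(σ^2) = F, and if n is even then Fix(σ^2) ≠ F. -/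
open Polynomial

/-!
For monic `f` of degree `m`, comparing top coefficients in `f · d = q · f` forces the right
cofactor `q` to be the constant `σᵐ(d)`, so a constant `d` lies in the eigenring exactly when
`σᵐ(d) aᵢ = aᵢ σⁱ(d)` for every coefficient `aᵢ` of `f`. For `f = t² - a₁t - a₀` the condition
at `a₁ ≠ 0` reads `σ(d) = d`, i.e. `d ∈ F` since `σ` generates `Gal(K/F)`; when `a₁ = 0 ≠ a₀`
it reads `σ²(d) = d`. By the Galois correspondence `Fix(σ²) = F` iff `σ²` generates the cyclic
group of order `n`, i.e. iff `n` is coprime to `2`.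
-/

section SkewMul

variable {K : Type} [Field K] (σ : K ≃+* K)

theorem coeff_sMul (p q : K[X]) (k : ℕ) :
    (sMul σ p q).coeff k
      = ∑ i ∈ Finset.range (k + 1), p.coeff i * (σ ^ i) (q.coeff (k - i)) := by
  rw [sMul, Polynomial.sum, finsetSum_coeff]
  simp only [coeff_mul_X_pow', coeff_C_mul, coeff_map]
  rw [← Finset.sum_filter]
  refine Finset.sum_subset (fun i hi => ?_) (fun i hik hi => ?_)
  · simp only [Finset.mem_filter, mem_support_iff] at hi
    exact Finset.mem_range.2 (by omega)
  · rw [Finset.mem_range] at hik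
    simp only [Finset.mem_filter, mem_support_iff, not_and] at hi
    simp [not_not.1 fun h => hi h (by omega)]

theorem coeff_sMul_C (p : K[X]) (d : K) (k : ℕ) :
    (sMul σ p (C d)).coeff k = p.coeff k * (σ ^ k) d := by
  rw [coeff_sMul, Finset.sum_eq_single_of_mem k (Finset.self_mem_range_succ k)]
  · simp
  · intro i hi hik
    have : k - i ≠ 0 := by rw [Finset.mem_range] at hi; omega
    simp [coeff_C, this]

theorem coeff_C_sMul (c : K) (p : K[X]) (k : ℕ) :
    (sMul σ (C c) p).coeff k = c * p.coeff k := by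
  rw [coeff_sMul, Finset.sum_eq_single_of_mem 0 (by simp)]
  · simp
  · intro i _ hi
    simp [coeff_C, hi]

theorem coeff_sMul_natDegree_add (q f : K[X]) :
    (sMul σ q f).coeff (q.natDegree + f.natDegree)
      = q.leadingCoeff * (σ ^ q.natDegree) f.leadingCoeff := by
  rw [coeff_sMul, Finset.sum_eq_single_of_mem q.natDegree (Finset.mem_range.2 (by omega))
    fun i _ hi => ?_, Nat.add_sub_cancel_left, leadingCoeff, leadingCoeff]
  rcases lt_or_gt_of_ne hi with hlt | hgt
  · rw [coeff_eq_zero_of_natDegree_lt (by omega : f.natDegree < _), map_zero, mul_zero]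
  · rw [coeff_eq_zero_of_natDegree_lt hgt, zero_mul]

theorem natDegree_eq_zero_of_sMul_C_eq {f q : K[X]} (hf : f ≠ 0) {d : K}
    (h : sMul σ f (C d) = sMul σ q f) : q.natDegree = 0 := by
  by_contra hq
  have hq0 : q ≠ 0 := by rintro rfl; exact hq natDegree_zero
  have hcoeff := coeff_sMul_natDegree_add σ q f
  rw [← h, coeff_sMul_C, coeff_eq_zero_of_natDegree_lt (by omega), zero_mul, eq_comm] at hcoeff
  exact mul_ne_zero (leadingCoeff_ne_zero.2 hq0)
    ((_root_.map_ne_zero _).2 (leadingCoeff_ne_zero.2 hf)) hcoeff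

theorem inEigenring_C_iff {f : K[X]} (hf : f.Monic) (hdeg : 0 < f.natDegree) (d : K) :
    InEigenring σ f (C d) ↔
      ∀ k, (σ ^ f.natDegree) d * f.coeff k = f.coeff k * (σ ^ k) d := by
  constructor
  · rintro ⟨-, q, hq⟩
    obtain ⟨c, rfl⟩ := natDegree_eq_zero.1 (natDegree_eq_zero_of_sMul_C_eq σ hf.ne_zero hq)
    have hcoeff k : f.coeff k * (σ ^ k) d = c * f.coeff k := by
      rw [← coeff_sMul_C, ← coeff_C_sMul, hq]
    have hc : c = (σ ^ f.natDegree) d := by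
      simpa [hf.coeff_natDegree] using (hcoeff f.natDegree).symm
    intro k
    rw [hcoeff, hc]
  · intro h
    refine ⟨degree_C_le.trans_lt ?_, C ((σ ^ f.natDegree) d), ?_⟩
    · exact_mod_cast natDegree_pos_iff_degree_pos.1 hdeg
    · ext k
      rw [coeff_sMul_C, coeff_C_sMul, h]

theorem inEigenring_C_X_sq_sub_iff (a₀ a₁ d : K) :
    InEigenring σ (X ^ 2 - C a₁ * X - C a₀) (C d) ↔
      σ (σ d) * a₁ = a₁ * σ d ∧ σ (σ d) * a₀ = a₀ * d := by
  have hmonic : (X ^ 2 - C a₁ * X - C a₀).Monic := by monicity!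
  have hdeg : (X ^ 2 - C a₁ * X - C a₀).natDegree = 2 := by compute_degree!
  rw [inEigenring_C_iff σ hmonic (by omega), hdeg]
  refine ⟨fun h => by simpa using And.intro (h 1) (h 0), ?_⟩
  rintro ⟨h₁, h₀⟩ (_ | _ | _ | k) <;> simp [h₀, h₁]

end SkewMul

section Galois

open IntermediateField

theorem Subgroup.zpowers_pow_eq_top_iff {G : Type*} [Group G] [Finite G] {g : G}
    (hg : ∀ x, x ∈ zpowers g) (k : ℕ) :
    zpowers (g ^ k) = ⊤ ↔ (Nat.card G).Coprime k := by
  rw [← card_eq_iff_eq_top, Nat.card_zpowers, orderOf_pow,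
    orderOf_eq_card_of_forall_mem_zpowers hg]
  refine ⟨fun h => ?_, fun h => by rw [h.gcd_eq_one, Nat.div_one]⟩
  have hmul := Nat.div_mul_cancel (Nat.gcd_dvd_left (Nat.card G) k)
  rw [h] at hmul
  exact (Nat.mul_eq_left Nat.card_pos.ne').1 hmul

variable {F E : Type*} [Field F] [Field E] [Algebra F E]

theorem IntermediateField.mem_fixedField_zpowers_iff (τ : Gal(E/F)) (x : E) :
    x ∈ fixedField (Subgroup.zpowers τ) ↔ τ x = x := by
  rw [mem_fixedField_iff]
  refine ⟨fun h => h τ (Subgroup.mem_zpowers τ), fun h g hg => ?_⟩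
  have hle : Subgroup.zpowers τ ≤ MulAction.stabilizer Gal(E/F) x :=
    Subgroup.zpowers_le.2 (MulAction.mem_stabilizer_iff.2 h)
  exact MulAction.mem_stabilizer_iff.1 (hle hg)

variable [IsGalois F E] [FiniteDimensional F E]

theorem IntermediateField.fixedField_eq_bot_iff {H : Subgroup Gal(E/F)} :
    fixedField H = ⊥ ↔ H = ⊤ := by
  refine ⟨fun h => ?_, fun h => h ▸ IsGalois.fixedField_top⟩
  rw [← fixingSubgroup_fixedField H, h, fixingSubgroup_bot]

theorem IsGalois.mem_bot_iff_of_forall_mem_zpowers {σ : Gal(E/F)}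
    (hσ : ∀ τ, τ ∈ Subgroup.zpowers σ) (x : E) :
    x ∈ (⊥ : IntermediateField F E) ↔ σ x = x := by
  rw [← IsGalois.fixedField_top, ← (Subgroup.eq_top_iff' _).2 hσ, mem_fixedField_zpowers_iff]

theorem IsGalois.fixedField_zpowers_sq_eq_bot_iff {σ : Gal(E/F)}
    (hσ : ∀ τ, τ ∈ Subgroup.zpowers σ) :
    fixedField (Subgroup.zpowers (σ ^ 2)) = ⊥ ↔ Odd (Module.finrank F E) := by
  rw [fixedField_eq_bot_iff, Subgroup.zpowers_pow_eq_top_iff hσ, IsGalois.card_aut_eq_finrank,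
    Nat.coprime_two_right]

end Galois

theorem nucleus_degree_two_general (F K : Type) [Field F] [Field K] [Algebra F K]
    [IsGalois F K] [FiniteDimensional F K]
    (n : ℕ) (hn : Module.finrank F K = n)
    (σ : K ≃ₐ[F] K) (hgen : ∀ τ : K ≃ₐ[F] K, τ ∈ Subgroup.zpowers σ)
    (σr : K ≃+* K) (hσr : ∀ x, σr x = σ x)
    (a₀ a₁ : K) (f : K[X]) (hf : f = X ^ 2 - C a₁ * X - C a₀) :
    (a₁ ≠ 0 → {d : K | InEigenring σr f (C d)} =
        ((⊥ : IntermediateField F K) : Set K)) ∧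
      (a₁ = 0 → a₀ ≠ 0 → {d : K | InEigenring σr f (C d)} =
        (IntermediateField.fixedField (Subgroup.zpowers (σ ^ 2)) : Set K)) ∧
      (Odd n → IntermediateField.fixedField (Subgroup.zpowers (σ ^ 2)) = ⊥) ∧
      (Even n → IntermediateField.fixedField (Subgroup.zpowers (σ ^ 2)) ≠ ⊥) := by
  subst hf hn
  have hσ_sq : ∀ x, σr (σr x) = (σ ^ 2) x := by simp [hσr, sq]
  have hfix_sq := IsGalois.fixedField_zpowers_sq_eq_bot_iff hgen
  refine ⟨fun ha₁ => ?_, fun ha₁ ha₀ => ?_, hfix_sq.2,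
    fun heven h => Nat.not_odd_iff_even.2 heven (hfix_sq.1 h)⟩
  · ext d
    simp only [Set.mem_ofPred_eq, SetLike.mem_coe, inEigenring_C_X_sq_sub_iff,
      IsGalois.mem_bot_iff_of_forall_mem_zpowers hgen, hσr]
    refine ⟨fun ⟨h₁, _⟩ => σ.injective (mul_right_cancel₀ ha₁ (h₁.trans (mul_comm _ _))),
      fun h => ?_⟩
    rw [h, h]
    exact ⟨mul_comm _ _, mul_comm _ _⟩
  · subst ha₁
    ext d
    simp only [Set.mem_ofPred_eq, SetLike.mem_coe, inEigenring_C_X_sq_sub_iff,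
      IntermediateField.mem_fixedField_zpowers_iff, hσ_sq, mul_zero, zero_mul, true_and,
      mul_comm a₀ d, mul_left_inj' ha₀]

/-- Section 5.1 (degree 2): let `K/F` be cyclic Galois of degree `n` with Galois
group `⟨σ⟩` and `f(t) = t² - a₁t - a₀ ∈ K[t;σ]` not right invariant. If `a₁ ≠ 0`
then `Nuc(S_f) = F`; if `a₁ = 0` and `a₀ ≠ 0` then `Nuc(S_f) = Fix(σ²)`.
Moreover `Fix(σ²) = F` if `n` is odd, and `Fix(σ²) ≠ F` if `n` is even. -/
theorem nucleus_degree_two (F K : Type) [Field F] [Field K] [Algebra F K]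
    [IsGalois F K] [FiniteDimensional F K]
    (n : ℕ) (hn : Module.finrank F K = n)
    (σ : K ≃ₐ[F] K) (hgen : ∀ τ : K ≃ₐ[F] K, τ ∈ Subgroup.zpowers σ)
    (σr : K ≃+* K) (hσr : ∀ x, σr x = σ x)
    (a₀ a₁ : K) (f : K[X]) (hf : f = X ^ 2 - C a₁ * X - C a₀)
    (hri : ¬ RightInvariant σr f) :
    (a₁ ≠ 0 → {d : K | InEigenring σr f (C d)} =
        ((⊥ : IntermediateField F K) : Set K)) ∧
      (a₁ = 0 → a₀ ≠ 0 → {d : K | InEigenring σr f (C d)} =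
        (IntermediateField.fixedField (Subgroup.zpowers (σ ^ 2)) : Set K)) ∧
      (Odd n → IntermediateField.fixedField (Subgroup.zpowers (σ ^ 2)) = ⊥) ∧
      (Even n → IntermediateField.fixedField (Subgroup.zpowers (σ ^ 2)) ≠ ⊥) :=
  nucleus_degree_two_general F K n hn σ hgen σr hσr a₀ a₁ f hf
end
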